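/- For γ > 5/3 and 1 < λ < (3γ - 1)/(√3(γ-1) + 2), the inequality (3γ² - 6γ - 1)(λ-1)² + 6(γ² - 1)(λ-1) - 6(γ-1)² < 0 holds. -/

import Mathlib

/-!
With `u = γ - 1` and `t = λ - 1` the expression is `q(t) = (3u² - 4)t² + 6u(u + 2)t - 6u²`, and
`λ < (3γ - 1)/(√3(γ - 1) + 2)` says `t < r := u(3 - √3)/(√3 u + 2)`. The point `r` is a root of
`q`, so `q(t) = (t - r)(a(t + r) + b)` with `a`, `b` the coefficients of `t²`, `t`. The second
factor is affine in `t` and positive at both ends `t = 0` and `t = r`, hence on the whole interval,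
while `t - r < 0`.
-/

open Real

theorem quadratic_neg_of_lt_root {a b c r t : ℝ} (hr : a * r ^ 2 + b * r + c = 0)
    (h₀ : 0 < a * r + b) (h₁ : 0 < 2 * a * r + b) (ht : 0 < t) (htr : t < r) :
    a * t ^ 2 + b * t + c < 0 := by
  have hfactor : a * t ^ 2 + b * t + c = (t - r) * (a * (t + r) + b) := by
    linear_combination hr
  have hconvex : r * (a * (t + r) + b) = (r - t) * (a * r + b) + t * (2 * a * r + b) := by ring
  have hsecond : 0 < a * (t + r) + b := by
    refine pos_of_mul_pos_right (hconvex ▸ ?_) (ht.trans htr).le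
    have := mul_pos (sub_pos.mpr htr) h₀
    have := mul_pos ht h₁
    linarith
  rw [hfactor]
  exact mul_neg_of_neg_of_pos (sub_neg.mpr htr) hsecond

noncomputable def criticalRoot (u : ℝ) : ℝ := u * (3 - √3) / (√3 * u + 2)

section criticalRoot

variable {u : ℝ}

private lemma sqrt_three_mul_add_two_pos (hu : 0 ≤ u) : 0 < √3 * u + 2 := by positivity

theorem criticalRoot_isRoot (hu : 0 ≤ u) :
    (3 * u ^ 2 - 4) * criticalRoot u ^ 2 + 6 * u * (u + 2) * criticalRoot u - 6 * u ^ 2 = 0 := by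
  have hD := (sqrt_three_mul_add_two_pos hu).ne'
  have hs : √3 ^ 2 = 3 := sq_sqrt (by norm_num)
  rw [criticalRoot]
  field_simp
  linear_combination (-u ^ 2 * (3 * u + 2) ^ 2) * hs

theorem mul_criticalRoot_add_pos (hu : 0 < u) :
    0 < (3 * u ^ 2 - 4) * criticalRoot u + 6 * u * (u + 2) := by
  have hD := sqrt_three_mul_add_two_pos hu.le
  have : (3 * u ^ 2 - 4) * criticalRoot u + 6 * u * (u + 2) =
      u * (3 * √3 * u ^ 2 + 9 * u ^ 2 + 12 * u + 12 * √3 * u + 12 + 4 * √3) / (√3 * u + 2) := by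
    rw [criticalRoot]
    field_simp
    ring
  rw [this]
  positivity

theorem two_mul_criticalRoot_add_pos (hu : 0 < u) :
    0 < 2 * (3 * u ^ 2 - 4) * criticalRoot u + 6 * u * (u + 2) := by
  have hD := sqrt_three_mul_add_two_pos hu.le
  have : 2 * (3 * u ^ 2 - 4) * criticalRoot u + 6 * u * (u + 2) =
      u * (18 * u ^ 2 + 12 * u + 12 * √3 * u + 8 * √3) / (√3 * u + 2) := by
    rw [criticalRoot]
    field_simp
    ring
  rw [this]
  positivity

end criticalRoot

theorem stmt_10 (γ lam : ℝ) (hγ : 5 / 3 < γ) (hl1 : 1 < lam)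
    (hl2 : lam < (3 * γ - 1) / (Real.sqrt 3 * (γ - 1) + 2)) :
    (3 * γ ^ 2 - 6 * γ - 1) * (lam - 1) ^ 2 + 6 * (γ ^ 2 - 1) * (lam - 1)
      - 6 * (γ - 1) ^ 2 < 0 := by
  have hu : 0 < γ - 1 := by linarith
  have hbound : (3 * γ - 1) / (√3 * (γ - 1) + 2) = criticalRoot (γ - 1) + 1 := by
    have := (sqrt_three_mul_add_two_pos hu.le).ne'
    rw [criticalRoot]
    field_simp
    ring
  have key := quadratic_neg_of_lt_root (criticalRoot_isRoot hu.le) (mul_criticalRoot_add_pos hu)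
    (two_mul_criticalRoot_add_pos hu) (sub_pos.mpr hl1) (by linarith)
  linear_combination key
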